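/- The series Σ_{n=1}^∞ (−1)^{n−1}·(H_{4n} + H_n − 2H_{2n}) converges and its sum equals (1/8)·log 2 − (3 − 2√2)·π/16. -/

import Mathlib

/-!
With `aₙ = H₄ₙ + Hₙ - 2H₂ₙ`, pairing consecutive terms turns the partial sum of length `2m`
into `Σ_{j<m} (a_{2j+1} - a_{2j+2})`, and `a_{n+1} - aₙ = ∫₀¹ x^{4n} (1 - 3x + x² + x³) dx`.
Summing the geometric series in `x⁸` gives `∫₀¹ q(x) (1 - x^{8m}) dx` for a rational function
`q`, which tends to `∫₀¹ q`, evaluated with an antiderivative made of logarithms and arctangents.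
The odd partial sums differ from the even ones by `a_{2m+1}`, which tends to `0` because
`Hₙ = log n + γ + o(1)`.
-/

open Filter Topology

/-- The `n`-th harmonic number `Hₙ = Σ_{j=1}^n 1/j`. -/
noncomputable def H (n : ℕ) : ℝ := ∑ j ∈ Finset.range n, 1 / ((j : ℝ) + 1)

theorem Filter.Tendsto.of_comp_two_mul_of_comp_two_mul_add_one {α : Type*} {u : ℕ → α}
    {l : Filter α} (h₀ : Tendsto (fun m => u (2 * m)) atTop l)
    (h₁ : Tendsto (fun m => u (2 * m + 1)) atTop l) : Tendsto u atTop l := by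
  intro s hs
  obtain ⟨N₀, hN₀⟩ := eventually_atTop.mp (h₀ hs)
  obtain ⟨N₁, hN₁⟩ := eventually_atTop.mp (h₁ hs)
  refine eventually_atTop.mpr ⟨2 * (N₀ + N₁), fun n hn => ?_⟩
  obtain ⟨m, rfl | rfl⟩ := Nat.even_or_odd' n
  · exact hN₀ m (by omega)
  · exact hN₁ m (by omega)

theorem Finset.sum_range_two_mul {M : Type*} [AddCommMonoid M] (f : ℕ → M) (m : ℕ) :
    ∑ n ∈ Finset.range (2 * m), f n
      = ∑ j ∈ Finset.range m, (f (2 * j) + f (2 * j + 1)) := by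
  induction m with
  | zero => simp
  | succ m ih => rw [mul_add, mul_one, Finset.sum_range_succ, Finset.sum_range_succ,
      Finset.sum_range_succ, ih, add_assoc]

theorem tendsto_intervalIntegral_mul_pow_zero {f : ℝ → ℝ}
    (hf : ContinuousOn f (Set.Icc 0 1)) :
    Tendsto (fun n : ℕ => ∫ x in (0 : ℝ)..1, f x * x ^ n) atTop (𝓝 0) := by
  obtain ⟨C, hC⟩ := isCompact_Icc.exists_bound_of_continuousOn hf
  have hbound (n : ℕ) : ‖∫ x in (0 : ℝ)..1, f x * x ^ n‖ ≤ C / (n + 1) := by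
    have h := intervalIntegral.norm_integral_le_of_norm_le (μ := MeasureTheory.volume)
      (f := fun x => f x * x ^ n) (g := fun x => C * x ^ n) zero_le_one ?_
      ((intervalIntegral.intervalIntegrable_pow n).const_mul C)
    · simpa [intervalIntegral.integral_const_mul, integral_pow, div_eq_mul_inv] using h
    · refine MeasureTheory.ae_of_all _ fun x hx => ?_
      rw [norm_mul, norm_pow, Real.norm_of_nonneg hx.1.le]
      exact mul_le_mul_of_nonneg_right (hC x (Set.Ioc_subset_Icc_self hx))
        (pow_nonneg hx.1.le n)
  refine squeeze_zero_norm hbound ?_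
  simpa [div_eq_mul_inv] using (tendsto_inv_atTop_zero.comp
    (tendsto_natCast_atTop_atTop.atTop_add tendsto_const_nhds)).const_mul C

lemma H_eq_harmonic (n : ℕ) : H n = harmonic n := by
  simp [H, harmonic]

lemma H_succ (n : ℕ) : H (n + 1) = H n + 1 / ((n : ℝ) + 1) := by
  simp [H, Finset.sum_range_succ]

noncomputable def harmonicCombo (n : ℕ) : ℝ := H (4 * n) + H n - 2 * H (2 * n)

lemma tendsto_harmonicCombo : Tendsto harmonicCombo atTop (𝓝 0) := by
  have hγ (k : ℕ) (hk : 0 < k) :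
      Tendsto (fun n : ℕ => (harmonic (k * n) : ℝ) - Real.log (k * n : ℕ)) atTop
        (𝓝 Real.eulerMascheroniConstant) :=
    Real.tendsto_harmonic_sub_log.comp (tendsto_id.const_mul_atTop' hk)
  have h := ((hγ 4 (by norm_num)).add (hγ 1 (by norm_num))).sub
    ((hγ 2 (by norm_num)).const_mul 2)
  rw [show Real.eulerMascheroniConstant + Real.eulerMascheroniConstant
    - 2 * Real.eulerMascheroniConstant = 0 by ring] at h
  refine h.congr' ?_
  filter_upwards [eventually_ne_atTop 0] with n hn
  have hn' : (n : ℝ) ≠ 0 := by exact_mod_cast hn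
  simp only [harmonicCombo, H_eq_harmonic, one_mul, Nat.cast_mul, Nat.cast_ofNat]
  rw [Real.log_mul (by norm_num) hn', Real.log_mul (by norm_num) hn',
    show (4 : ℝ) = 2 ^ 2 by norm_num, Real.log_pow]
  push_cast
  ring

lemma harmonicCombo_succ_sub (n : ℕ) : harmonicCombo (n + 1) - harmonicCombo n
    = 1 / (4 * (n : ℝ) + 1) - 3 / (4 * n + 2) + 1 / (4 * n + 3) + 1 / (4 * n + 4) := by
  rw [harmonicCombo, harmonicCombo, show 4 * (n + 1) = 4 * n + 1 + 1 + 1 + 1 by ring,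
    show 2 * (n + 1) = 2 * n + 1 + 1 by ring]
  simp only [H_succ]
  have h₁ : (2 * (n : ℝ) + 1) ≠ 0 := by positivity
  have h₂ : ((n : ℝ) + 1) ≠ 0 := by positivity
  push_cast
  field_simp
  ring

lemma harmonicCombo_succ_sub_eq_integral (n : ℕ) : harmonicCombo (n + 1) - harmonicCombo n
    = ∫ x in (0 : ℝ)..1, x ^ (4 * n) * (1 - 3 * x + x ^ 2 + x ^ 3) := by
  have hI (k : ℕ) : IntervalIntegrable (fun x : ℝ => x ^ k) MeasureTheory.volume 0 1 :=
    intervalIntegral.intervalIntegrable_pow k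
  have hexpand : (fun x : ℝ => x ^ (4 * n) * (1 - 3 * x + x ^ 2 + x ^ 3)) =
      fun x => x ^ (4 * n) - 3 * x ^ (4 * n + 1) + x ^ (4 * n + 2) + x ^ (4 * n + 3) := by
    ext x; ring
  rw [harmonicCombo_succ_sub, hexpand,
    intervalIntegral.integral_add (((hI _).sub ((hI _).const_mul 3)).add (hI _)) (hI _),
    intervalIntegral.integral_add ((hI _).sub ((hI _).const_mul 3)) (hI _),
    intervalIntegral.integral_sub (hI _) ((hI _).const_mul 3),
    intervalIntegral.integral_const_mul]
  simp only [integral_pow]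
  push_cast
  ring

/-- `q(x) = -x⁴ (1 - 3x + x² + x³) / (1 - x⁸)`, the generating function of the paired terms. -/
noncomputable def q (x : ℝ) : ℝ :=
  x ^ 4 * (x ^ 2 + 2 * x - 1) / ((1 + x) * (1 + x ^ 2) * (1 + x ^ 4))

lemma q_mul_one_sub_pow_eight {x : ℝ} (hx : 1 + x ≠ 0) :
    q x * (1 - x ^ 8) = -(x ^ 4 * (1 - 3 * x + x ^ 2 + x ^ 3)) := by
  rw [q, div_mul_eq_mul_div, div_eq_iff (by positivity)]
  ring

lemma continuousOn_q : ContinuousOn q (Set.Icc 0 1) := by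
  refine ContinuousOn.div (by fun_prop) (by fun_prop) fun x hx => ?_
  have := hx.1
  positivity

lemma intervalIntegrable_q : IntervalIntegrable q MeasureTheory.volume 0 1 :=
  (Set.uIcc_of_le (zero_le_one' ℝ) ▸ continuousOn_q).intervalIntegrable

lemma sum_range_two_mul_harmonicCombo (m : ℕ) :
    ∑ n ∈ Finset.range (2 * m), (-1 : ℝ) ^ n * harmonicCombo (n + 1)
      = (∫ x in (0 : ℝ)..1, q x) - ∫ x in (0 : ℝ)..1, q x * x ^ (8 * m) := by
  have hpair (j : ℕ) : (-1 : ℝ) ^ (2 * j) * harmonicCombo (2 * j + 1)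
      + (-1) ^ (2 * j + 1) * harmonicCombo (2 * j + 1 + 1)
      = ∫ x in (0 : ℝ)..1, q x * ((1 - x ^ 8) * (x ^ 8) ^ j) := by
    rw [pow_succ, pow_mul, neg_one_sq, one_pow, one_mul, one_mul, neg_one_mul, ← sub_eq_add_neg,
      ← neg_sub, harmonicCombo_succ_sub_eq_integral, ← intervalIntegral.integral_neg]
    refine intervalIntegral.integral_congr fun x hx => ?_
    have hx₀ : 0 ≤ x := (Set.uIcc_of_le (zero_le_one' ℝ) ▸ hx).1
    rw [← mul_assoc, q_mul_one_sub_pow_eight (by linarith)]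
    ring
  rw [Finset.sum_range_two_mul, Finset.sum_congr rfl fun j _ => hpair j,
    ← intervalIntegral.integral_finsetSum fun j _ =>
      intervalIntegrable_q.mul_continuousOn (by fun_prop),
    ← intervalIntegral.integral_sub intervalIntegrable_q
      (intervalIntegrable_q.mul_continuousOn (by fun_prop))]
  congr 1
  ext x
  rw [← Finset.mul_sum, ← Finset.mul_sum, mul_neg_geom_sum, ← pow_mul]
  ring

lemma hasDerivAt_arctan_sqrt_two_mul_add_one_add (x : ℝ) :
    HasDerivAt (fun y => Real.arctan (√2 * y + 1) + Real.arctan (√2 * y - 1))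
      (√2 * (1 + x ^ 2) / (1 + x ^ 4)) x := by
  have hs : √2 ^ 2 = 2 := Real.sq_sqrt (by norm_num)
  have hd := ((((hasDerivAt_id x).const_mul √2).add_const 1).arctan).add
    (((hasDerivAt_id x).const_mul √2).sub_const 1).arctan
  refine hd.congr_deriv ?_
  have hA : 1 + (√2 * x + 1) ^ 2 = 2 * (x ^ 2 + √2 * x + 1) := by linear_combination x ^ 2 * hs
  have hB : 1 + (√2 * x - 1) ^ 2 = 2 * (x ^ 2 - √2 * x + 1) := by linear_combination x ^ 2 * hs
  have hAB : (x ^ 2 + √2 * x + 1) * (x ^ 2 - √2 * x + 1) = 1 + x ^ 4 := by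
    linear_combination (-x ^ 2) * hs
  have hA0 : x ^ 2 + √2 * x + 1 ≠ 0 := by nlinarith [sq_nonneg (√2 * x + 1)]
  have hB0 : x ^ 2 - √2 * x + 1 ≠ 0 := by nlinarith [sq_nonneg (√2 * x - 1)]
  simp only [id, mul_one, hA, hB]
  have hsum : (x ^ 2 + √2 * x + 1) + (x ^ 2 - √2 * x + 1) = 2 * (1 + x ^ 2) := by ring
  generalize x ^ 2 + √2 * x + 1 = A at *
  generalize x ^ 2 - √2 * x + 1 = B at *
  rw [← hAB, show 1 + x ^ 2 = (A + B) / 2 by rw [hsum]; ring]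
  field_simp
  ring

noncomputable def Q (x : ℝ) : ℝ :=
  -(1 / 2) * Real.log (1 + x) + (1 / 2) * Real.log (1 + x ^ 2) + (1 / 8) * Real.log (1 + x ^ 4)
    + (√2 / 4) * (Real.arctan (√2 * x + 1) + Real.arctan (√2 * x - 1))
    - (3 / 4) * Real.arctan (x ^ 2)

lemma hasDerivAt_Q {x : ℝ} (hx : 1 + x ≠ 0) : HasDerivAt Q (q x) x := by
  have h2 : 1 + x ^ 2 ≠ 0 := by positivity
  have h4 : 1 + x ^ 4 ≠ 0 := by positivity
  have hd := (((((((hasDerivAt_id x).const_add 1).log hx).const_mul (-(1 / 2) : ℝ)).add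
    ((((hasDerivAt_pow 2 x).const_add 1).log h2).const_mul (1 / 2 : ℝ))).add
    ((((hasDerivAt_pow 4 x).const_add 1).log h4).const_mul (1 / 8 : ℝ))).add
    ((hasDerivAt_arctan_sqrt_two_mul_add_one_add x).const_mul (√2 / 4))).sub
    ((hasDerivAt_pow 2 x).arctan.const_mul (3 / 4 : ℝ))
  refine hd.congr_deriv ?_
  have hs : √2 ^ 2 = 2 := Real.sq_sqrt (by norm_num)
  simp only [id, q]
  field_simp
  rw [hs]
  ring

lemma integral_q :
    ∫ x in (0 : ℝ)..1, q x = (1 / 8) * Real.log 2 - (3 - 2 * Real.sqrt 2) * Real.pi / 16 := by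
  rw [intervalIntegral.integral_eq_sub_of_hasDerivAt
    (fun x hx => hasDerivAt_Q (by linarith [(Set.uIcc_of_le (zero_le_one' ℝ) ▸ hx).1]))
    intervalIntegrable_q]
  have hs : √2 ^ 2 = 2 := Real.sq_sqrt (by norm_num)
  have hinv : (√2 + 1)⁻¹ = √2 - 1 := inv_eq_of_mul_eq_one_right (by linear_combination hs)
  have harctan : Real.arctan (√2 - 1) = Real.pi / 2 - Real.arctan (√2 + 1) := by
    rw [← hinv]
    exact Real.arctan_inv_of_pos (by positivity)
  norm_num [Q, harctan]
  ring

/-- The series `Σ_{n=1}^∞ (−1)^{n−1}(H_{4n} + H_n − 2H_{2n})` converges,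
with sum `(1/8)·log 2 − (3 − 2√2)·π/16`. -/
theorem stmt_18 :
    Tendsto (fun m => ∑ n ∈ Finset.range m,
        (-1 : ℝ) ^ n * (H (4 * (n + 1)) + H (n + 1) - 2 * H (2 * (n + 1))))
      atTop
      (𝓝 ((1 / 8) * Real.log 2 - (3 - 2 * Real.sqrt 2) * Real.pi / 16)) := by
  change Tendsto (fun m => ∑ n ∈ Finset.range m, (-1 : ℝ) ^ n * harmonicCombo (n + 1)) atTop _
  rw [← integral_q]
  have heven : Tendsto (fun m => ∑ n ∈ Finset.range (2 * m),
      (-1 : ℝ) ^ n * harmonicCombo (n + 1)) atTop (𝓝 (∫ x in (0 : ℝ)..1, q x)) := by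
    simp_rw [sum_range_two_mul_harmonicCombo]
    simpa using tendsto_const_nhds.sub ((tendsto_intervalIntegral_mul_pow_zero continuousOn_q).comp
      (tendsto_id.const_mul_atTop' (by norm_num : 0 < 8)))
  have hodd := heven.add (tendsto_harmonicCombo.comp
    (tendsto_atTop_mono (fun m => by omega : ∀ m : ℕ, m ≤ 2 * m + 1) tendsto_id))
  rw [add_zero] at hodd
  refine heven.of_comp_two_mul_of_comp_two_mul_add_one (hodd.congr fun m => ?_)
  simp [Finset.sum_range_succ, pow_mul]
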